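/- arXiv:2410.10856 — 3 statements merged into one kernel-verified Lean document; each statement's English description precedes it below -/
import Mathlib

section
/- Let r be a nonzero integer and X ≥ 2. The number of quadruples (a,b,p,d) of integers with 1 ≤ a,b,p,d ≤ X, p prime, p dividing a, and ad − pb = r, is O(X^{1+ε}) for every ε > 0. More precisely, it is at most C·d(r)·X·(log X)^2 for an absolute constant C, where d(r) is the number of divisors of r. -/
open Finset

lemma fiber_card (Nz m a : ℤ) (ha : 1 ≤ a) (hNz1 : 1 ≤ Nz) :
    ((((Finset.Icc (1:ℤ) Nz)).filter (fun d => a*d ∈ Finset.Icc (m+1) (m+Nz))).card : ℝ)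
      ≤ 2*(Nz:ℝ)/(a:ℝ) + 1 := by
  classical
  set T := (Finset.Icc (1:ℤ) Nz).filter (fun d => a*d ∈ Finset.Icc (m+1) (m+Nz)) with hT
  have haR : (0:ℝ) < (a:ℝ) := by exact_mod_cast ha
  have hNR : (0:ℝ) ≤ (Nz:ℝ) := by exact_mod_cast (by omega : (0:ℤ) ≤ Nz)
  rcases T.eq_empty_or_nonempty with h | ⟨d1, hd1⟩
  · rw [h]
    simp only [Finset.card_empty, Nat.cast_zero]
    have : 0 ≤ 2*(Nz:ℝ)/(a:ℝ) := div_nonneg (by linarith) haR.le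
    linarith
  · have hNz : 1 ≤ Nz := hNz1
    set t : ℤ := (Nz - 1) / a with ht
    have htnn : 0 ≤ t := Int.ediv_nonneg (by omega) (by omega)
    have hta : t * a ≤ Nz - 1 := Int.ediv_mul_le _ (by omega)
    have hsub : T ⊆ Finset.Icc (d1 - t) (d1 + t) := by
      intro d hd
      have h1 := Finset.mem_Icc.mp (Finset.mem_filter.mp hd).2
      have h2 := Finset.mem_Icc.mp (Finset.mem_filter.mp hd1).2
      have k1 : d - d1 ≤ t := by
        rw [ht, Int.le_ediv_iff_mul_le (by omega)]; nlinarith [h1.2, h2.1]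
      have k2 : d1 - d ≤ t := by
        rw [ht, Int.le_ediv_iff_mul_le (by omega)]; nlinarith [h1.1, h2.2]
      rw [Finset.mem_Icc]; omega
    have hcard : T.card ≤ (Finset.Icc (d1 - t) (d1 + t)).card := Finset.card_le_card hsub
    have h2 : (Finset.Icc (d1 - t) (d1 + t)).card = (2*t+1).toNat := by
      rw [Int.card_Icc]; congr 1; ring
    have h3 : (((2*t+1).toNat : ℤ) : ℝ) = ((2*t+1 : ℤ) : ℝ) := by
      exact_mod_cast congrArg (Int.cast : ℤ → ℝ) (Int.toNat_of_nonneg (by omega))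
    have htR : (t:ℝ) ≤ (Nz:ℝ)/(a:ℝ) := by
      rw [le_div_iff₀ haR]
      have : ((t*a : ℤ):ℝ) ≤ ((Nz - 1 : ℤ):ℝ) := by exact_mod_cast hta
      push_cast at this ⊢; linarith
    calc (T.card : ℝ) ≤ ((2*t+1 : ℤ) : ℝ) := by
            rw [← h3]; exact_mod_cast hcard.trans_eq h2
      _ ≤ 2*(Nz:ℝ)/(a:ℝ) + 1 := by push_cast; rw [mul_div_assoc]; linarith

lemma sum_inv_le (Nz : ℤ) (X : ℝ) (h1 : 1 ≤ Nz) (h : (Nz:ℝ) ≤ X) (hX : 1 ≤ X) :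
    ∑ a ∈ Finset.Icc (1:ℤ) Nz, ((a:ℝ))⁻¹ ≤ 1 + Real.log X := by
  have hre : ∑ a ∈ Finset.Icc (1:ℤ) Nz, ((a:ℝ))⁻¹
      = ∑ n ∈ Finset.Icc (1:ℕ) Nz.toNat, ((n:ℝ))⁻¹ := by
    refine Finset.sum_nbij' (fun a => a.toNat) (fun n => (n:ℤ)) ?_ ?_ ?_ ?_ ?_
    · intro a ha
      rw [Finset.mem_Icc] at ha ⊢
      show 1 ≤ a.toNat ∧ a.toNat ≤ Nz.toNat
      omega
    · intro n hn
      rw [Finset.mem_Icc] at hn ⊢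
      show 1 ≤ (n:ℤ) ∧ (n:ℤ) ≤ Nz
      omega
    · intro a ha
      rw [Finset.mem_Icc] at ha
      show ((a.toNat : ℤ)) = a
      omega
    · intro n hn
      rw [Finset.mem_Icc] at hn
      show (n:ℤ).toNat = n
      omega
    · intro a ha
      rw [Finset.mem_Icc] at ha
      show ((a:ℝ))⁻¹ = ((a.toNat : ℝ))⁻¹
      congr 1
      exact_mod_cast (congrArg (Int.cast : ℤ → ℝ) (Int.toNat_of_nonneg (by omega))).symm
  rw [hre]
  have h2 : ∑ n ∈ Finset.Icc (1:ℕ) Nz.toNat, ((n:ℝ))⁻¹ = (harmonic Nz.toNat : ℝ) := by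
    rw [harmonic_eq_sum_Icc]; push_cast; rfl
  rw [h2]
  have hc : ((Nz.toNat : ℕ) : ℝ) = (Nz:ℝ) := by
    exact_mod_cast congrArg (Int.cast : ℤ → ℝ) (Int.toNat_of_nonneg (by omega))
  calc (harmonic Nz.toNat : ℝ) ≤ 1 + Real.log Nz.toNat := harmonic_le_one_add_log _
    _ ≤ 1 + Real.log X := by
      have hpos : (0:ℝ) < (Nz.toNat : ℝ) := by rw [hc]; exact_mod_cast (by omega : (0:ℤ) < Nz)
      have : Real.log (Nz.toNat : ℝ) ≤ Real.log X := Real.log_le_log hpos (by rw [hc]; exact h)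
      linarith


/-- For `r ≠ 0` and `X ≥ 2`, the number of quadruples `(a,b,p,d)` of
integers with `1 ≤ a,b,p,d ≤ X`, `p` prime, `p ∣ a` and `a*d - p*b = r` is at most
`C · d(r) · X · (log X)²` for an absolute constant `C` (hence `O(X^{1+ε})`). -/
theorem stmt0 :
    ∃ C : ℝ, 0 < C ∧ ∀ (r : ℤ), r ≠ 0 → ∀ X : ℝ, 2 ≤ X →
      (Set.ncard {q : ℤ × ℤ × ℤ × ℤ |
          (1 ≤ q.1 ∧ (q.1 : ℝ) ≤ X) ∧ (1 ≤ q.2.1 ∧ (q.2.1 : ℝ) ≤ X) ∧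
          (1 ≤ q.2.2.1 ∧ (q.2.2.1 : ℝ) ≤ X) ∧ (1 ≤ q.2.2.2 ∧ (q.2.2.2 : ℝ) ≤ X) ∧
          Prime q.2.2.1 ∧ q.2.2.1 ∣ q.1 ∧
          q.1 * q.2.2.2 - q.2.2.1 * q.2.1 = r} : ℝ)
        ≤ C * (r.natAbs.divisors.card : ℝ) * X * (Real.log X) ^ 2 := by
  classical
  refine ⟨100, by norm_num, ?_⟩
  intro r hr X hX
  set Nz : ℤ := ⌊X⌋ with hNzdef
  have hN1 : 1 ≤ Nz := by
    rw [hNzdef]; exact Int.le_floor.mpr (by push_cast; linarith)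
  have hNX : (Nz:ℝ) ≤ X := Int.floor_le X
  have hX0 : (0:ℝ) < X := by linarith
  have hlog2 : (0.69:ℝ) ≤ Real.log X := by
    have h2 : (0.6931471803:ℝ) < Real.log 2 := Real.log_two_gt_d9
    have : Real.log 2 ≤ Real.log X := Real.log_le_log (by norm_num) hX
    linarith
  set F : Finset (ℤ×ℤ×ℤ×ℤ) :=
    ((Finset.Icc (1:ℤ) Nz) ×ˢ (Finset.Icc (1:ℤ) Nz) ×ˢ (Finset.Icc (1:ℤ) Nz) ×ˢ
      (Finset.Icc (1:ℤ) Nz)).filter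
      (fun q => Prime q.2.2.1 ∧ q.2.2.1 ∣ q.1 ∧ q.1 * q.2.2.2 - q.2.2.1 * q.2.1 = r) with hFdef
  -- step 1: the set is contained in F
  have hSF : {q : ℤ × ℤ × ℤ × ℤ |
          (1 ≤ q.1 ∧ (q.1 : ℝ) ≤ X) ∧ (1 ≤ q.2.1 ∧ (q.2.1 : ℝ) ≤ X) ∧
          (1 ≤ q.2.2.1 ∧ (q.2.2.1 : ℝ) ≤ X) ∧ (1 ≤ q.2.2.2 ∧ (q.2.2.2 : ℝ) ≤ X) ∧
          Prime q.2.2.1 ∧ q.2.2.1 ∣ q.1 ∧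
          q.1 * q.2.2.2 - q.2.2.1 * q.2.1 = r} ⊆ ↑F := by
    intro q hq
    obtain ⟨h1, h2, h3, h4, h5, h6, h7⟩ := hq
    simp only [hFdef, Finset.coe_filter, Set.mem_setOf_eq, Finset.mem_product,
      Finset.mem_Icc]
    refine ⟨⟨⟨h1.1, Int.le_floor.mpr h1.2⟩, ⟨h2.1, Int.le_floor.mpr h2.2⟩,
      ⟨h3.1, Int.le_floor.mpr h3.2⟩, ⟨h4.1, Int.le_floor.mpr h4.2⟩⟩, h5, h6, h7⟩
  have hstep1 : ({q : ℤ × ℤ × ℤ × ℤ |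
          (1 ≤ q.1 ∧ (q.1 : ℝ) ≤ X) ∧ (1 ≤ q.2.1 ∧ (q.2.1 : ℝ) ≤ X) ∧
          (1 ≤ q.2.2.1 ∧ (q.2.2.1 : ℝ) ≤ X) ∧ (1 ≤ q.2.2.2 ∧ (q.2.2.2 : ℝ) ≤ X) ∧
          Prime q.2.2.1 ∧ q.2.2.1 ∣ q.1 ∧
          q.1 * q.2.2.2 - q.2.2.1 * q.2.1 = r}).ncard ≤ F.card := by
    have := Set.ncard_le_ncard hSF F.finite_toSet
    rwa [Set.ncard_coe_finset] at this
  -- step 2: fiberwise over the prime p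
  set P : Finset ℤ := (Finset.Icc (1:ℤ) Nz).filter (fun p => Prime p ∧ p ∣ r) with hPdef
  have hkey : ∀ q ∈ F, q.2.2.1 ∈ P := by
    intro q hq
    simp only [hFdef, Finset.mem_filter, Finset.mem_product] at hq
    obtain ⟨⟨ha, hb, hp, hd⟩, hprime, hdvd, heq⟩ := hq
    rw [hPdef, Finset.mem_filter]
    refine ⟨hp, hprime, ?_⟩
    have h1 : q.2.2.1 ∣ q.1 * q.2.2.2 := dvd_mul_of_dvd_left hdvd _
    have h2 : q.2.2.1 ∣ q.2.2.1 * q.2.1 := dvd_mul_right _ _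
    rw [← heq]; exact dvd_sub h1 h2
  have hfib : F.card = ∑ p ∈ P, (F.filter (fun q => q.2.2.1 = p)).card :=
    Finset.card_eq_sum_card_fiberwise hkey
  -- step 3: bound each fiber
  set B : ℝ := 2*X*(1+Real.log X) + X with hBdef
  have hfiber : ∀ p ∈ P, ((F.filter (fun q => q.2.2.1 = p)).card : ℝ) ≤ B := by
    intro p hp
    rw [hPdef, Finset.mem_filter, Finset.mem_Icc] at hp
    obtain ⟨⟨hp1, hpN⟩, hprime, hpr⟩ := hp
    set m : ℤ := r / p with hmdef
    have hpm : p * m = r := Int.mul_ediv_cancel' hpr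
    have hp0 : p ≠ 0 := by omega
    set E : Finset (ℤ×ℤ) := ((Finset.Icc (1:ℤ) Nz) ×ˢ (Finset.Icc (1:ℤ) Nz)).filter
      (fun x => x.1*x.2 ∈ Finset.Icc (m+1) (m+Nz)) with hEdef
    -- injection into E
    have hinj : (F.filter (fun q => q.2.2.1 = p)).card ≤ E.card := by
      apply Finset.card_le_card_of_injOn (fun q => (q.1 / p, q.2.2.2))
      · intro q hq
        simp only [Finset.mem_coe, Finset.mem_filter, hFdef, Finset.mem_product] at hq
        obtain ⟨⟨⟨ha, hb, _, hd⟩, hprime, hdvd, heq⟩, hpq⟩ := hq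
        rw [Finset.mem_Icc] at ha hb hd
        rw [hpq] at hdvd heq
        have hpa : p * (q.1 / p) = q.1 := Int.mul_ediv_cancel' hdvd
        set a' : ℤ := q.1 / p with ha'
        have ha'1 : 1 ≤ a' := by nlinarith [ha.1, hpa]
        have ha'N : a' ≤ Nz := by nlinarith [ha.2, hpa]
        have hb' : q.2.1 = a' * q.2.2.2 - m := by
          have : p * q.2.1 = p * (a' * q.2.2.2 - m) := by
            rw [mul_sub, ← mul_assoc, hpa, hpm]; linarith [heq]
          exact mul_left_cancel₀ hp0 this
        rw [Finset.mem_coe, hEdef, Finset.mem_filter, Finset.mem_product, Finset.mem_Icc,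
          Finset.mem_Icc, Finset.mem_Icc]
        refine ⟨⟨⟨ha'1, ha'N⟩, hd⟩, ?_, ?_⟩
        · show m + 1 ≤ a' * q.2.2.2
          omega
        · show a' * q.2.2.2 ≤ m + Nz
          omega
      · intro q1 hq1 q2 hq2 hfe
        simp only [Finset.mem_coe, Finset.mem_filter, hFdef, Finset.mem_product] at hq1 hq2
        obtain ⟨⟨_, _, hdvd1, heq1⟩, hpq1⟩ := hq1
        obtain ⟨⟨_, _, hdvd2, heq2⟩, hpq2⟩ := hq2
        rw [hpq1] at hdvd1 heq1
        rw [hpq2] at hdvd2 heq2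
        have hfe' : (q1.1 / p, q1.2.2.2) = (q2.1 / p, q2.2.2.2) := hfe
        rw [Prod.mk.injEq] at hfe'
        obtain ⟨h1, h2⟩ := hfe'
        have ha : q1.1 = q2.1 := by
          rw [← Int.mul_ediv_cancel' hdvd1, ← Int.mul_ediv_cancel' hdvd2, h1]
        have hb : q1.2.1 = q2.2.1 := by
          apply mul_left_cancel₀ hp0
          have := heq1.trans heq2.symm
          rw [ha, h2] at this
          linarith
        have hp' : q1.2.2.1 = q2.2.2.1 := by rw [hpq1, hpq2]
        exact Prod.ext ha (Prod.ext hb (Prod.ext hp' h2))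
    -- bound E via fibers over the first coordinate
    have hEsub : E ⊆ (Finset.Icc (1:ℤ) Nz).biUnion
        (fun a => ({a} : Finset ℤ) ×ˢ ((Finset.Icc (1:ℤ) Nz).filter
          (fun d => a*d ∈ Finset.Icc (m+1) (m+Nz)))) := by
      intro x hx
      rw [hEdef, Finset.mem_filter, Finset.mem_product] at hx
      rw [Finset.mem_biUnion]
      exact ⟨x.1, hx.1.1, by
        rw [Finset.mem_product, Finset.mem_singleton, Finset.mem_filter]
        exact ⟨rfl, hx.1.2, hx.2⟩⟩
    have hEcard : (E.card : ℝ) ≤ ∑ a ∈ Finset.Icc (1:ℤ) Nz, (2*(Nz:ℝ)/(a:ℝ) + 1) := by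
      have h1 : E.card ≤ ∑ a ∈ Finset.Icc (1:ℤ) Nz,
          (({a} : Finset ℤ) ×ˢ ((Finset.Icc (1:ℤ) Nz).filter
            (fun d => a*d ∈ Finset.Icc (m+1) (m+Nz)))).card :=
        (Finset.card_le_card hEsub).trans (Finset.card_biUnion_le)
      have h2 : (E.card : ℝ) ≤ ∑ a ∈ Finset.Icc (1:ℤ) Nz,
          ((((Finset.Icc (1:ℤ) Nz).filter
            (fun d => a*d ∈ Finset.Icc (m+1) (m+Nz)))).card : ℝ) := by
        have := h1
        simp only [Finset.card_product, Finset.card_singleton, one_mul] at this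
        exact_mod_cast this
      refine h2.trans (Finset.sum_le_sum ?_)
      intro a ha
      rw [Finset.mem_Icc] at ha
      exact fiber_card Nz m a ha.1 hN1
    -- evaluate the sum
    have hsum : ∑ a ∈ Finset.Icc (1:ℤ) Nz, (2*(Nz:ℝ)/(a:ℝ) + 1) ≤ B := by
      rw [Finset.sum_add_distrib, Finset.sum_const, nsmul_eq_mul, mul_one]
      have hc : ((Finset.Icc (1:ℤ) Nz).card : ℝ) ≤ X := by
        rw [Int.card_Icc]
        have : ((Nz + 1 - 1).toNat : ℤ) = Nz := by omega
        calc (((Nz + 1 - 1).toNat : ℕ) : ℝ) = ((Nz:ℤ):ℝ) := by exact_mod_cast congrArg (Int.cast : ℤ → ℝ) this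
          _ ≤ X := hNX
      have hs : ∑ a ∈ Finset.Icc (1:ℤ) Nz, 2*(Nz:ℝ)/(a:ℝ)
          = 2*(Nz:ℝ) * ∑ a ∈ Finset.Icc (1:ℤ) Nz, ((a:ℝ))⁻¹ := by
        rw [Finset.mul_sum]
        apply Finset.sum_congr rfl
        intro a _
        rw [div_eq_mul_inv]
      rw [hs]
      have hinv := sum_inv_le Nz X hN1 hNX (by linarith)
      have hinvnn : (0:ℝ) ≤ ∑ a ∈ Finset.Icc (1:ℤ) Nz, ((a:ℝ))⁻¹ := by
        apply Finset.sum_nonneg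
        intro a ha
        rw [Finset.mem_Icc] at ha
        have : (0:ℝ) < (a:ℝ) := by exact_mod_cast lt_of_lt_of_le zero_lt_one ha.1
        positivity
      have hNnn : (0:ℝ) ≤ (Nz:ℝ) := by exact_mod_cast (by omega : (0:ℤ) ≤ Nz)
      rw [hBdef]
      have : 2*(Nz:ℝ) * ∑ a ∈ Finset.Icc (1:ℤ) Nz, ((a:ℝ))⁻¹ ≤ 2*X*(1+Real.log X) := by
        apply mul_le_mul (by linarith) hinv hinvnn (by linarith)
      linarith
    calc ((F.filter (fun q => q.2.2.1 = p)).card : ℝ) ≤ (E.card : ℝ) := by exact_mod_cast hinj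
      _ ≤ _ := hEcard.trans hsum
  -- step 4: number of primes is at most d(r)
  have hPcard : P.card ≤ r.natAbs.divisors.card := by
    apply Finset.card_le_card_of_injOn (fun p => p.natAbs)
    · intro p hp
      rw [Finset.mem_coe, hPdef, Finset.mem_filter, Finset.mem_Icc] at hp
      rw [Finset.mem_coe, Nat.mem_divisors]
      exact ⟨Int.natAbs_dvd_natAbs.mpr hp.2.2, Int.natAbs_ne_zero.mpr hr⟩
    · intro p1 hp1 p2 hp2 he
      rw [Finset.mem_coe, hPdef, Finset.mem_filter, Finset.mem_Icc] at hp1 hp2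
      have he' : p1.natAbs = p2.natAbs := he
      omega
  -- combine
  have hBnn : (0:ℝ) ≤ B := by
    rw [hBdef]
    have : (0:ℝ) ≤ Real.log X := by linarith
    nlinarith
  have hFcard : (F.card : ℝ) ≤ (r.natAbs.divisors.card : ℝ) * B := by
    rw [hfib]
    push_cast
    calc ∑ p ∈ P, ((F.filter (fun q => q.2.2.1 = p)).card : ℝ)
        ≤ ∑ p ∈ P, B := Finset.sum_le_sum hfiber
      _ = (P.card : ℝ) * B := by rw [Finset.sum_const, nsmul_eq_mul]
      _ ≤ (r.natAbs.divisors.card : ℝ) * B := by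
          apply mul_le_mul_of_nonneg_right _ hBnn
          exact_mod_cast hPcard
  have hBfinal : B ≤ 100 * X * (Real.log X)^2 := by
    rw [hBdef]
    set L := Real.log X with hL
    nlinarith [hlog2, hX0, mul_le_mul_of_nonneg_left hlog2 (by linarith : (0:ℝ) ≤ L),
      mul_le_mul_of_nonneg_left hlog2 hX0.le]
  have hdr : (0:ℝ) ≤ (r.natAbs.divisors.card : ℝ) := by positivity
  calc ({q : ℤ × ℤ × ℤ × ℤ |
          (1 ≤ q.1 ∧ (q.1 : ℝ) ≤ X) ∧ (1 ≤ q.2.1 ∧ (q.2.1 : ℝ) ≤ X) ∧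
          (1 ≤ q.2.2.1 ∧ (q.2.2.1 : ℝ) ≤ X) ∧ (1 ≤ q.2.2.2 ∧ (q.2.2.2 : ℝ) ≤ X) ∧
          Prime q.2.2.1 ∧ q.2.2.1 ∣ q.1 ∧
          q.1 * q.2.2.2 - q.2.2.1 * q.2.1 = r}.ncard : ℝ)
      ≤ (F.card : ℝ) := by exact_mod_cast hstep1
    _ ≤ (r.natAbs.divisors.card : ℝ) * B := hFcard
    _ ≤ (r.natAbs.divisors.card : ℝ) * (100 * X * (Real.log X)^2) :=
        mul_le_mul_of_nonneg_left hBfinal hdr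
    _ = 100 * (r.natAbs.divisors.card : ℝ) * X * (Real.log X)^2 := by ring
end

section
/- Let r be a nonzero integer, X ≥ 2, and 1 ≤ H ≤ X. The number of triples (a,p,b) of positive integers with 1 ≤ a,p,b ≤ X, pb ≡ −r (mod a), and (r+pb)/a ∈ (1−H,1) ∪ (X, X+H), is O(H·X^{1+ε}) for every ε > 0. -/
lemma succ_le_two_pow' (a : ℕ) : a + 1 ≤ 2 ^ a := by
  induction a with
  | zero => simp
  | succ n ih => rw [pow_succ]; omega

/-- Divisor bound: `d(n) ≤ C·n^ε`. -/
lemma divisor_bound (ε : ℝ) (hε : 0 < ε) :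
    ∃ C : ℝ, 0 < C ∧ ∀ n : ℕ, n ≠ 0 → (n.divisors.card : ℝ) ≤ C * (n : ℝ) ^ ε := by
  have hL : 0 < Real.log 2 := Real.log_pos one_lt_two
  set L := Real.log 2 with hLdef
  set M : ℝ := 1 + 1 / (ε * L) with hMdef
  have hu : 0 < ε * L := mul_pos hε hL
  have hM1 : 1 ≤ M := by
    have : 0 < 1 / (ε * L) := by positivity
    simp [hMdef]; positivity
  set B : ℕ := ⌈(2:ℝ) ^ (1/ε)⌉₊ with hBdef
  refine ⟨M ^ (B + 1), by positivity, ?_⟩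
  intro n hn
  rw [Nat.card_divisors hn]
  -- product formula for n
  have hprod : ∏ p ∈ n.primeFactors, p ^ n.factorization p = n := by
    have h := Nat.factorization_prod_pow_eq_self hn
    rwa [Finsupp.prod, Nat.support_factorization] at h
  have hcast : (n : ℝ) = ∏ p ∈ n.primeFactors, ((p : ℝ) ^ (n.factorization p : ℕ)) := by
    conv_lhs => rw [← hprod]
    push_cast; ring
  have hrpow : (n : ℝ) ^ ε = ∏ p ∈ n.primeFactors, ((p : ℝ) ^ (n.factorization p : ℕ)) ^ ε := by
    rw [hcast, ← Real.finset_prod_rpow _ _ (fun i _ => by positivity) ε]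
  -- pointwise bound
  have key : ∀ p ∈ n.primeFactors,
      ((n.factorization p + 1 : ℕ) : ℝ) ≤
        (if p ≤ B then M else 1) * ((p : ℝ) ^ (n.factorization p : ℕ)) ^ ε := by
    intro p hp
    have hpp : p.Prime := Nat.prime_of_mem_primeFactors hp
    have hp2 : (2:ℝ) ≤ (p:ℝ) := by exact_mod_cast hpp.two_le
    have ha1 : 1 ≤ n.factorization p := (Nat.Prime.factorization_pos_of_dvd hpp hn
      (Nat.dvd_of_mem_primeFactors hp))
    set a := n.factorization p with hadef
    have hpa : ((p : ℝ) ^ (a : ℕ)) ^ ε = (p : ℝ) ^ ((a : ℝ) * ε) := by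
      rw [Real.rpow_natCast_mul (by positivity)]
    by_cases hcase : p ≤ B
    · rw [if_pos hcase, hpa]
      have h2a : (2:ℝ) ^ ((a:ℝ) * ε) ≤ (p:ℝ) ^ ((a:ℝ) * ε) :=
        Real.rpow_le_rpow (by norm_num) hp2 (by positivity)
      have hexp : (1 : ℝ) + (a:ℝ) * ε * L ≤ (2:ℝ) ^ ((a:ℝ) * ε) := by
        rw [Real.rpow_def_of_pos (by norm_num)]
        have := Real.add_one_le_exp (L * ((a:ℝ) * ε))
        linarith [this]
      have hMg : M * (1 + (a:ℝ) * ε * L) ≤ M * ((p:ℝ) ^ ((a:ℝ) * ε)) := by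
        apply mul_le_mul_of_nonneg_left (le_trans hexp h2a) (by linarith)
      refine le_trans ?_ hMg
      have hinv : (ε * L) * (1 / (ε * L)) = 1 := mul_one_div_cancel hu.ne'
      have ha1' : (1:ℝ) ≤ (a:ℝ) := by exact_mod_cast ha1
      push_cast
      rw [hMdef]
      have hexpand : (1 + 1/(ε*L)) * (1 + (a:ℝ)*ε*L) = 1 + (a:ℝ)*ε*L + 1/(ε*L) + (a:ℝ) := by
        field_simp
        ring
      have h1 : 0 ≤ (a:ℝ)*ε*L := by positivity
      have h2 : 0 ≤ 1/(ε*L) := by positivity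
      linarith [hexpand]
    · rw [if_neg hcase, one_mul, hpa]
      have hB : (2:ℝ) ^ (1/ε) ≤ (B:ℝ) := Nat.le_ceil _
      have hpB : (B:ℝ) < (p:ℝ) := by exact_mod_cast Nat.lt_of_not_le (by omega)
      have hp2e : (2:ℝ) ≤ (p:ℝ) ^ ε := by
        have h1 : ((2:ℝ) ^ (1/ε)) ^ ε ≤ (p:ℝ) ^ ε :=
          Real.rpow_le_rpow (by positivity) (le_trans hB hpB.le) hε.le
        rwa [← Real.rpow_mul (by norm_num), one_div_mul_cancel hε.ne', Real.rpow_one] at h1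
      have : (p:ℝ) ^ ((a:ℝ) * ε) = ((p:ℝ) ^ ε) ^ (a : ℕ) := by
        rw [← Real.rpow_natCast ((p:ℝ)^ε) a, ← Real.rpow_mul (by positivity), mul_comm]
      rw [this]
      calc ((a + 1 : ℕ) : ℝ) ≤ ((2 ^ a : ℕ) : ℝ) := by exact_mod_cast succ_le_two_pow' a
        _ = (2:ℝ) ^ (a:ℕ) := by push_cast; ring
        _ ≤ ((p:ℝ) ^ ε) ^ (a:ℕ) := pow_le_pow_left₀ (by norm_num) hp2e a
  -- combine
  have hle : (∏ p ∈ n.primeFactors, ((n.factorization p + 1 : ℕ) : ℝ)) ≤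
      ∏ p ∈ n.primeFactors, ((if p ≤ B then M else 1) * ((p : ℝ) ^ (n.factorization p : ℕ)) ^ ε) :=
    Finset.prod_le_prod (fun i _ => by positivity) key
  rw [Finset.prod_mul_distrib] at hle
  have hconst : (∏ p ∈ n.primeFactors, (if p ≤ B then M else 1)) ≤ M ^ (B + 1) := by
    rw [Finset.prod_ite, Finset.prod_const, Finset.prod_const_one, mul_one]
    apply pow_le_pow_right₀ hM1
    calc (n.primeFactors.filter (· ≤ B)).card ≤ (Finset.range (B+1)).card := by
          apply Finset.card_le_card
          intro x hx
          simp only [Finset.mem_filter] at hx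
          simp [Finset.mem_range]; omega
      _ = B + 1 := Finset.card_range _
  calc ((∏ p ∈ n.primeFactors, (n.factorization p + 1)  : ℕ) : ℝ)
      = ∏ p ∈ n.primeFactors, ((n.factorization p + 1 : ℕ) : ℝ) := by push_cast; ring
    _ ≤ _ := hle
    _ ≤ M ^ (B+1) * ∏ p ∈ n.primeFactors, ((p : ℝ) ^ (n.factorization p : ℕ)) ^ ε := by
        apply mul_le_mul_of_nonneg_right hconst
        apply Finset.prod_nonneg; intro i _; positivity
    _ = M ^ (B+1) * (n:ℝ) ^ ε := by rw [hrpow]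


lemma toNat_cast_le {m : ℤ} {c : ℝ} (hc : 0 ≤ c) (h : (m : ℝ) ≤ c) : (m.toNat : ℝ) ≤ c := by
  rcases le_or_gt 0 m with hm | hm
  · have e : ((m.toNat : ℕ) : ℝ) = (m : ℝ) := by exact_mod_cast Int.toNat_of_nonneg hm
    rw [e]; exact h
  · rw [Int.toNat_of_nonpos hm.le]; simpa using hc


/-- For `r ≠ 0`, `X ≥ 2`, `1 ≤ H ≤ X`, the number of triples `(a,p,b)`
of positive integers `≤ X` with `p*b ≡ -r (mod a)` and `(r + p*b)/a` lying in
`(1-H,1) ∪ (X, X+H)` is `O(H · X^{1+ε})` for every `ε > 0`. -/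
theorem stmt1 :
    ∀ ε : ℝ, 0 < ε → ∃ C : ℝ, 0 < C ∧
      ∀ (r : ℤ), r ≠ 0 → ∀ X H : ℝ, 2 ≤ X → 1 ≤ H → H ≤ X →
      (Set.ncard {q : ℤ × ℤ × ℤ |
          (1 ≤ q.1 ∧ (q.1 : ℝ) ≤ X) ∧ (1 ≤ q.2.1 ∧ (q.2.1 : ℝ) ≤ X) ∧
          (1 ≤ q.2.2 ∧ (q.2.2 : ℝ) ≤ X) ∧
          (q.1 : ℤ) ∣ (q.2.1 * q.2.2 + r) ∧
          (((r + q.2.1 * q.2.2 : ℤ) : ℝ) / (q.1 : ℝ) ∈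
            Set.Ioo (1 - H) 1 ∪ Set.Ioo X (X + H))} : ℝ)
        ≤ C * H * X ^ (1 + ε) := by
  intro ε hε
  obtain ⟨C₀, hC₀, hdiv⟩ := divisor_bound (ε/2) (half_pos hε)
  refine ⟨3 * C₀, by positivity, ?_⟩
  intro r hr X H hX hH1 hHX
  have hX0 : (0:ℝ) < X := by linarith
  set S := {q : ℤ × ℤ × ℤ |
      (1 ≤ q.1 ∧ (q.1 : ℝ) ≤ X) ∧ (1 ≤ q.2.1 ∧ (q.2.1 : ℝ) ≤ X) ∧
      (1 ≤ q.2.2 ∧ (q.2.2 : ℝ) ≤ X) ∧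
      (q.1 : ℤ) ∣ (q.2.1 * q.2.2 + r) ∧
      (((r + q.2.1 * q.2.2 : ℤ) : ℝ) / (q.1 : ℝ) ∈
        Set.Ioo (1 - H) 1 ∪ Set.Ioo X (X + H))} with hSdef
  set F : ℤ × ℤ × ℤ → ℤ × ℤ × ℤ := fun q => (q.1, (r + q.2.1 * q.2.2) / q.1, q.2.1) with hFdef
  set A : Finset ℤ := Finset.Icc 1 ⌊X⌋ with hAdef
  set K : Finset ℤ := Finset.Icc ⌈1 - H⌉ 0 ∪ Finset.Icc (⌊X⌋ + 1) (⌈X + H⌉ - 1) with hKdef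
  set T : Finset (ℤ × ℤ × ℤ) := (A ×ˢ K ×ˢ A).filter
      (fun q => q.2.2 ∣ (q.2.1 * q.1 - r) ∧ 1 ≤ q.2.1 * q.1 - r ∧ q.2.1 * q.1 - r ≤ ⌊X⌋ ^ 2)
      with hTdef
  -- basic facts about a member of S
  have hSfact : ∀ q ∈ S, ((r + q.2.1 * q.2.2) / q.1) * q.1 = r + q.2.1 * q.2.2 := by
    intro q hq
    obtain ⟨-, -, -, hdvd, -⟩ := hq
    exact Int.ediv_mul_cancel (by rwa [add_comm] at hdvd)
  -- injectivity of F on S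
  have hFinj : Set.InjOn F S := by
    intro q hq q' hq' heq
    rw [hFdef] at heq
    simp only [Prod.mk.injEq] at heq
    obtain ⟨h1, h2, h3⟩ := heq
    have hk := hSfact q hq
    have hk' := hSfact q' hq'
    have hb : r + q.2.1 * q.2.2 = r + q'.2.1 * q'.2.2 := by
      rw [← hk, ← hk', h2, h1]
    rw [← h3] at hb
    have hb2 : q.2.1 * q.2.2 = q.2.1 * q'.2.2 := by omega
    have hp0 : q.2.1 ≠ 0 := by
      have := hq.2.1.1; omega
    have hbb : q.2.2 = q'.2.2 := mul_left_cancel₀ hp0 hb2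
    exact Prod.ext h1 (Prod.ext h3 hbb)
  -- image lands in T
  have himg : F '' S ⊆ ↑T := by
    rintro y ⟨q, hq, rfl⟩
    obtain ⟨⟨ha1, haX⟩, ⟨hp1, hpX⟩, ⟨hb1, hbX⟩, hdvd, hmem⟩ := hq
    set k := (r + q.2.1 * q.2.2) / q.1 with hkdef
    have hk : k * q.1 = r + q.2.1 * q.2.2 := hSfact q ⟨⟨ha1, haX⟩, ⟨hp1, hpX⟩, ⟨hb1, hbX⟩, hdvd, hmem⟩
    have hkcast : ((k : ℤ) : ℝ) = ((r + q.2.1 * q.2.2 : ℤ) : ℝ) / (q.1 : ℝ) :=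
      Int.cast_div_charZero (by rwa [add_comm] at hdvd)
    have hkK : k ∈ K := by
      rw [hKdef, Finset.mem_union]
      rcases hmem with h | h
      · left
        rw [Finset.mem_Icc]
        rw [← hkcast] at h
        obtain ⟨hl, hrr⟩ := h
        constructor
        · exact Int.ceil_le.mpr hl.le
        · have hk1 : (k : ℝ) < 1 := hrr
          have : k < 1 := by exact_mod_cast hk1
          omega
      · right
        rw [Finset.mem_Icc]
        rw [← hkcast] at h
        obtain ⟨hl, hrr⟩ := h
        constructor
        · have : ⌊X⌋ < k := Int.floor_lt.mpr hl
          omega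
        · have : k < ⌈X + H⌉ := Int.lt_ceil.mpr hrr
          omega
    have hpA : q.2.1 ∈ A := by
      rw [hAdef, Finset.mem_Icc]
      exact ⟨hp1, Int.le_floor.mpr hpX⟩
    have haA : q.1 ∈ A := by
      rw [hAdef, Finset.mem_Icc]
      exact ⟨ha1, Int.le_floor.mpr haX⟩
    have hn : k * q.1 - r = q.2.1 * q.2.2 := by omega
    have hbf : q.2.2 ≤ ⌊X⌋ := Int.le_floor.mpr hbX
    have hpf : q.2.1 ≤ ⌊X⌋ := Int.le_floor.mpr hpX
    simp only [hTdef, Finset.coe_filter, Set.mem_setOf_eq, Finset.mem_product]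
    refine ⟨⟨haA, hkK, hpA⟩, ?_, ?_, ?_⟩
    · rw [hn]; exact Dvd.intro _ rfl
    · rw [hn]; exact one_le_mul_of_one_le_of_one_le hp1 hb1
    · rw [hn, sq]
      have h0b : (0:ℤ) ≤ q.2.2 := by omega
      exact mul_le_mul hpf hbf h0b (by omega)
  -- ncard S ≤ T.card
  have hcard1 : (S.ncard : ℝ) ≤ (T.card : ℝ) := by
    have h1 : S.ncard = (F '' S).ncard := (Set.ncard_image_of_injOn hFinj).symm
    have h2 : (F '' S).ncard ≤ T.card := by
      have := Set.ncard_le_ncard himg T.finite_toSet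
      simpa [Set.ncard_coe_finset] using this
    exact_mod_cast h1 ▸ Nat.cast_le.mpr h2
  -- fiberwise count
  have hfib : T.card = ∑ x ∈ A ×ˢ K, (T.filter (fun q => (q.1, q.2.1) = x)).card := by
    apply Finset.card_eq_sum_card_fiberwise
    intro q hq
    rw [hTdef] at hq
    simp only [Finset.mem_coe, Finset.mem_filter, Finset.mem_product] at hq
    simp only [Finset.mem_coe, Finset.mem_product]
    exact ⟨hq.1.1, hq.1.2.1⟩
  -- bound each fiber
  have hDX : (0:ℝ) < C₀ * X ^ ε := by positivity
  have hfibbd : ∀ x ∈ A ×ˢ K, ((T.filter (fun q => (q.1, q.2.1) = x)).card : ℝ) ≤ C₀ * X ^ ε := by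
    intro x hx
    set Fb := T.filter (fun q => (q.1, q.2.1) = x) with hFbdef
    rcases Fb.eq_empty_or_nonempty with he | ⟨q₀, hq₀⟩
    · rw [he]; simp; positivity
    · set n : ℤ := x.2 * x.1 - r with hndef
      have hq₀' : q₀ ∈ T ∧ (q₀.1, q₀.2.1) = x := Finset.mem_filter.mp hq₀
      have hx1 : q₀.1 = x.1 := congrArg Prod.fst hq₀'.2
      have hx2 : q₀.2.1 = x.2 := congrArg Prod.snd hq₀'.2
      have hq₀T := hq₀'.1
      rw [hTdef, Finset.mem_filter] at hq₀T
      have hn1 : 1 ≤ n := by rw [hndef, ← hx1, ← hx2]; exact hq₀T.2.2.1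
      have hn2 : n ≤ ⌊X⌋ ^ 2 := by rw [hndef, ← hx1, ← hx2]; exact hq₀T.2.2.2
      have hnne : n.natAbs ≠ 0 := by omega
      have hcardle : Fb.card ≤ n.natAbs.divisors.card := by
        apply Finset.card_le_card_of_injOn (fun q => q.2.2.natAbs)
        · intro q hq
          have hq' := Finset.mem_filter.mp hq
          have hy1 : q.1 = x.1 := congrArg Prod.fst hq'.2
          have hy2 : q.2.1 = x.2 := congrArg Prod.snd hq'.2
          have hqT := hq'.1
          rw [hTdef, Finset.mem_filter] at hqT
          have hdvd : q.2.2 ∣ n := by rw [hndef, ← hy1, ← hy2]; exact hqT.2.1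
          rw [Finset.mem_coe, Nat.mem_divisors]
          exact ⟨Int.natAbs_dvd_natAbs.mpr hdvd, hnne⟩
        · intro q hq q' hq' heq
          have hq1 := Finset.mem_filter.mp hq
          have hq2 := Finset.mem_filter.mp hq'
          have hy1 : q.1 = x.1 := congrArg Prod.fst hq1.2
          have hy2 : q.2.1 = x.2 := congrArg Prod.snd hq1.2
          have hz1 : q'.1 = x.1 := congrArg Prod.fst hq2.2
          have hz2 : q'.2.1 = x.2 := congrArg Prod.snd hq2.2
          have hqT := hq1.1; have hqT' := hq2.1
          rw [hTdef, Finset.mem_filter, Finset.mem_product, Finset.mem_product] at hqT hqT'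
          have hb1 : 1 ≤ q.2.2 := (Finset.mem_Icc.mp hqT.1.2.2).1
          have hb2 : 1 ≤ q'.2.2 := (Finset.mem_Icc.mp hqT'.1.2.2).1
          have : q.2.2 = q'.2.2 := by
            have heq' : (q.2.2).natAbs = (q'.2.2).natAbs := heq
            omega
          exact Prod.ext (hy1.trans hz1.symm) (Prod.ext (hy2.trans hz2.symm) this)
      have hdivbd : (n.natAbs.divisors.card : ℝ) ≤ C₀ * (n.natAbs : ℝ) ^ (ε/2) :=
        hdiv n.natAbs hnne
      have hnX : ((n.natAbs : ℕ) : ℝ) ≤ X ^ (2:ℕ) := by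
        have h1 : ((n.natAbs : ℕ) : ℤ) = n := Int.natAbs_of_nonneg (by omega)
        have h2 : (n : ℝ) ≤ ((⌊X⌋ : ℤ) : ℝ) ^ (2:ℕ) := by exact_mod_cast hn2
        have h3 : ((⌊X⌋ : ℤ) : ℝ) ≤ X := Int.floor_le X
        have h4 : (0:ℝ) ≤ ((⌊X⌋ : ℤ) : ℝ) := by
          exact_mod_cast Int.floor_nonneg.mpr hX0.le
        calc ((n.natAbs : ℕ) : ℝ) = ((n : ℤ) : ℝ) := by
              have habs : |n| = n := abs_of_nonneg (by omega)
              rw [Nat.cast_natAbs, habs]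
          _ ≤ ((⌊X⌋ : ℤ) : ℝ) ^ (2:ℕ) := h2
          _ ≤ X ^ (2:ℕ) := pow_le_pow_left₀ h4 h3 2
      have hrp : ((n.natAbs : ℕ) : ℝ) ^ (ε/2) ≤ (X ^ (2:ℕ)) ^ (ε/2) :=
        Real.rpow_le_rpow (by positivity) hnX (by positivity)
      have hXe : (X ^ (2:ℕ)) ^ (ε/2) = X ^ ε := by
        rw [← Real.rpow_natCast_mul hX0.le 2 (ε/2)]
        norm_num
        congr 1
        ring
      calc (Fb.card : ℝ) ≤ (n.natAbs.divisors.card : ℝ) := by exact_mod_cast hcardle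
        _ ≤ C₀ * ((n.natAbs : ℕ) : ℝ) ^ (ε/2) := hdivbd
        _ ≤ C₀ * (X ^ (2:ℕ)) ^ (ε/2) := by
            apply mul_le_mul_of_nonneg_left hrp hC₀.le
        _ = C₀ * X ^ ε := by rw [hXe]
  -- total
  have hsum : (T.card : ℝ) ≤ ((A ×ˢ K).card : ℝ) * (C₀ * X ^ ε) := by
    rw [hfib]
    push_cast
    calc (∑ x ∈ A ×ˢ K, ((T.filter (fun q => (q.1, q.2.1) = x)).card : ℝ))
        ≤ ∑ x ∈ A ×ˢ K, (C₀ * X ^ ε) := Finset.sum_le_sum hfibbd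
      _ = ((A ×ˢ K).card : ℝ) * (C₀ * X ^ ε) := by
          rw [Finset.sum_const, nsmul_eq_mul]
  -- card bounds for A and K
  have hAcard : ((A.card : ℕ) : ℝ) ≤ X := by
    rw [hAdef, Int.card_Icc]
    apply toNat_cast_le hX0.le
    push_cast
    linarith [Int.floor_le X]
  have hKcard : ((K.card : ℕ) : ℝ) ≤ 3 * H := by
    have h1 : K.card ≤ (Finset.Icc ⌈1 - H⌉ 0).card + (Finset.Icc (⌊X⌋ + 1) (⌈X + H⌉ - 1)).card :=
      Finset.card_union_le _ _
    have h2 : ((Finset.Icc ⌈1 - H⌉ 0).card : ℝ) ≤ H := by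
      rw [Int.card_Icc]
      apply toNat_cast_le (by linarith)
      push_cast
      have := Int.le_ceil (1 - H)
      linarith
    have h3 : ((Finset.Icc (⌊X⌋ + 1) (⌈X + H⌉ - 1)).card : ℝ) ≤ 2 * H := by
      rw [Int.card_Icc]
      apply toNat_cast_le (by linarith)
      push_cast
      have hc := Int.ceil_lt_add_one (X + H)
      have hf := Int.sub_one_lt_floor X
      linarith
    calc ((K.card : ℕ) : ℝ) ≤ ((Finset.Icc ⌈1 - H⌉ 0).card : ℝ) +
          ((Finset.Icc (⌊X⌋ + 1) (⌈X + H⌉ - 1)).card : ℝ) := by exact_mod_cast h1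
      _ ≤ H + 2 * H := add_le_add h2 h3
      _ = 3 * H := by ring
  have hprodcard : (((A ×ˢ K).card : ℕ) : ℝ) ≤ X * (3 * H) := by
    rw [Finset.card_product]
    push_cast
    have hA0 : (0:ℝ) ≤ (A.card : ℝ) := by positivity
    have hK0 : (0:ℝ) ≤ (K.card : ℝ) := by positivity
    exact mul_le_mul hAcard hKcard hK0 hX0.le
  calc (S.ncard : ℝ) ≤ (T.card : ℝ) := hcard1
    _ ≤ ((A ×ˢ K).card : ℝ) * (C₀ * X ^ ε) := hsum
    _ ≤ (X * (3 * H)) * (C₀ * X ^ ε) := by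
        apply mul_le_mul_of_nonneg_right hprodcard hDX.le
    _ = 3 * C₀ * H * (X * X ^ ε) := by ring
    _ = 3 * C₀ * H * X ^ (1 + ε) := by
        rw [Real.rpow_add hX0, Real.rpow_one]
end

section
/- Let X ≥ 2, H with √X ≤ H ≤ X, r a nonzero integer, and α : ℕ → ℂ with |α(n)| ≤ n^ε. Assume |F̂_{a,c}(y)| ≤ C/|y| for y ≠ 0 and additionally |F̂_{a,c}(y)| ≤ C_k H^{1−k}|y|^{−k}(1 + |c/a|^{k−1}) for every k ≥ 2. Then the tail sum Σ_{1≤a≤X} (|α(a)|/a) Σ_{|n| > X^{1+ε}/H} Σ_{1≤p≤X} |F̂_{a,p}(n/a)| is O(X^{−100}). -/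
open scoped BigOperators

set_option maxHeartbeats 1000000 in

/-- the tail of the dual sum is negligible.  If `F̂_{a,c}` satisfies
`|F̂_{a,c}(y)| ≤ C/|y|` and `|F̂_{a,c}(y)| ≤ C_k H^{1-k}|y|^{-k}(1+|c/a|^{k-1})` for
every `k ≥ 2`, then
`Σ_{1≤a≤X} (|α(a)|/a) Σ_{|n| > X^{1+ε}/H} Σ_{1≤p≤X} |F̂_{a,p}(n/a)| = O(X^{-100})`. -/
theorem stmt14 :
    ∀ ε : ℝ, 0 < ε → ∀ (C : ℝ) (Ck : ℕ → ℝ), ∃ C' : ℝ, 0 < C' ∧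
      ∀ (X H : ℝ), 2 ≤ X → Real.sqrt X ≤ H → H ≤ X →
      ∀ (r : ℤ), r ≠ 0 → ∀ α : ℕ → ℂ, (∀ n : ℕ, 1 ≤ n → ‖α n‖ ≤ (n : ℝ) ^ ε) →
      ∀ G : ℕ → ℕ → ℝ → ℂ,
        (∀ a c : ℕ, ∀ y : ℝ, y ≠ 0 → ‖G a c y‖ ≤ C / |y|) →
        (∀ a c : ℕ, 1 ≤ a → ∀ k : ℕ, 2 ≤ k → ∀ y : ℝ, y ≠ 0 →
          ‖G a c y‖ ≤ Ck k * H ^ ((1 : ℝ) - k) * |y| ^ (-(k : ℝ)) *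
            (1 + ((c : ℝ) / (a : ℝ)) ^ ((k : ℝ) - 1))) →
      ∑ a ∈ Finset.Icc 1 ⌊X⌋₊, (‖α a‖ / (a : ℝ)) *
          ∑' n : ℤ, (if X ^ (1 + ε) / H < (|n| : ℝ) then
            ∑ p ∈ Finset.Icc 1 ⌊X⌋₊, ‖G a p ((n : ℝ) / (a : ℝ))‖ else 0)
        ≤ C' * X ^ (-100 : ℝ) := by
  intro ε hε C Ck
  obtain ⟨k, hk2, hke⟩ : ∃ k : ℕ, 2 ≤ k ∧ 104 + 3 * ε ≤ ε * k := by
    refine ⟨max 2 ⌈(104 + 3 * ε) / ε⌉₊, le_max_left _ _, ?_⟩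
    have h1 : (104 + 3 * ε) / ε ≤ (⌈(104 + 3 * ε) / ε⌉₊ : ℝ) := Nat.le_ceil _
    have h2 : ((⌈(104 + 3 * ε) / ε⌉₊ : ℕ) : ℝ) ≤ ((max 2 ⌈(104 + 3 * ε) / ε⌉₊ : ℕ) : ℝ) := by
      exact_mod_cast le_max_right 2 _
    have h3 := (div_le_iff₀ hε).mp (h1.trans h2)
    nlinarith
  have hS0sum : Summable (fun n : ℤ => 1 / ((n : ℝ) ^ 2)) :=
    Real.summable_one_div_int_pow.mpr one_lt_two
  set S0 : ℝ := ∑' n : ℤ, 1 / ((n : ℝ) ^ 2) with hS0def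
  have hS0nn : 0 ≤ S0 := tsum_nonneg fun n => by positivity
  refine ⟨2 * (1 + |Ck k|) * (1 + S0), by positivity, ?_⟩
  intro X H hX2 hHl hHu r hr α hα G hG1 hG2
  have hX0 : (0 : ℝ) < X := by linarith
  have hX1 : (1 : ℝ) ≤ X := by linarith
  have hH1 : (1 : ℝ) ≤ H := by
    have h := Real.sqrt_le_sqrt hX1
    rw [Real.sqrt_one] at h; linarith
  have hH0 : (0 : ℝ) < H := by linarith
  have he2 : (2 : ℝ) ≤ (k : ℝ) := by exact_mod_cast hk2
  set D : ℝ := 2 * |Ck k| * X ^ (2 + 2 * ε - ε * k) with hD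
  have hDnn : 0 ≤ D := by positivity
  -- key pointwise bound
  have key : ∀ a ∈ Finset.Icc 1 ⌊X⌋₊, ∀ n : ℤ,
      (if X ^ (1 + ε) / H < (|n| : ℝ) then
          ∑ p ∈ Finset.Icc 1 ⌊X⌋₊, ‖G a p ((n : ℝ) / (a : ℝ))‖ else 0)
        ≤ (X * D) * (1 / (n : ℝ) ^ 2) := by
    intro a ha n
    obtain ⟨ha1, haX'⟩ := Finset.mem_Icc.mp ha
    have haR1 : (1 : ℝ) ≤ (a : ℝ) := by exact_mod_cast ha1
    have haR0 : (0 : ℝ) < (a : ℝ) := by linarith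
    have haX : (a : ℝ) ≤ X := le_trans (by exact_mod_cast haX') (Nat.floor_le hX0.le)
    split_ifs with hcond
    · set N : ℝ := |(n : ℝ)| with hN
      have hNpos : (0 : ℝ) < N := by
        have h0 : (0 : ℝ) < X ^ (1 + ε) / H := by positivity
        linarith
      have hn0 : (n : ℝ) ≠ 0 := by
        intro h; rw [hN, h, abs_zero] at hNpos; exact lt_irrefl _ hNpos
      have hQN : X ^ (1 + ε) ≤ H * N := by
        rw [div_lt_iff₀ hH0] at hcond
        nlinarith
      have hp : ∀ p ∈ Finset.Icc 1 ⌊X⌋₊, ‖G a p ((n : ℝ) / (a : ℝ))‖ ≤ D * (1 / (n : ℝ) ^ 2) := by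
        intro p hpmem
        have hpX : (p : ℝ) ≤ X :=
          le_trans (by exact_mod_cast (Finset.mem_Icc.mp hpmem).2) (Nat.floor_le hX0.le)
        have hy : (n : ℝ) / (a : ℝ) ≠ 0 := div_ne_zero hn0 haR0.ne'
        have hGb := hG2 a p ha1 k hk2 _ hy
        rw [show |(n : ℝ) / (a : ℝ)| = N / (a : ℝ) by rw [abs_div, abs_of_pos haR0]] at hGb
        -- step 1 : 1 + (p/a)^(k-1) ≤ 2 (X/a)^(k-1)
        have hXa1 : (1 : ℝ) ≤ X / (a : ℝ) := (one_le_div haR0).mpr haX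
        have hone : (1 : ℝ) ≤ (X / (a : ℝ)) ^ ((k : ℝ) - 1) := by
          have h := Real.rpow_le_rpow_of_exponent_le hXa1 (show (0:ℝ) ≤ (k:ℝ) - 1 by linarith)
          rwa [Real.rpow_zero] at h
        have hmono : ((p : ℝ) / (a : ℝ)) ^ ((k : ℝ) - 1) ≤ (X / (a : ℝ)) ^ ((k : ℝ) - 1) :=
          Real.rpow_le_rpow (by positivity) (by gcongr) (by linarith)
        have hstep1 : 1 + ((p : ℝ) / (a : ℝ)) ^ ((k : ℝ) - 1)
            ≤ 2 * (X / (a : ℝ)) ^ ((k : ℝ) - 1) := by linarith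
        -- step 2 : the rpow computation, via logarithms
        have hLpos : (0 : ℝ) < H ^ ((1 : ℝ) - (k : ℝ)) * (N / (a : ℝ)) ^ (-(k : ℝ)) *
            (X / (a : ℝ)) ^ ((k : ℝ) - 1) := by positivity
        have hRpos : (0 : ℝ) < H⁻¹ * X ^ (2 + 2 * ε - ε * k) / N ^ 2 := by positivity
        have hlog : Real.log (H ^ ((1 : ℝ) - (k : ℝ)) * (N / (a : ℝ)) ^ (-(k : ℝ)) *
              (X / (a : ℝ)) ^ ((k : ℝ) - 1))
            ≤ Real.log (H⁻¹ * X ^ (2 + 2 * ε - ε * k) / N ^ 2) := by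
          rw [Real.log_mul (by positivity) (by positivity),
              Real.log_mul (by positivity) (by positivity),
              Real.log_rpow hH0, Real.log_rpow (by positivity), Real.log_rpow (by positivity),
              Real.log_div hNpos.ne' haR0.ne', Real.log_div hX0.ne' haR0.ne',
              Real.log_div (by positivity) (by positivity),
              Real.log_mul (by positivity) (by positivity),
              Real.log_inv, Real.log_rpow hX0, Real.log_pow]
          have hlaX : Real.log (a : ℝ) ≤ Real.log X := Real.log_le_log haR0 haX
          have hQHN : (1 + ε) * Real.log X ≤ Real.log H + Real.log N := by
            have h := Real.log_le_log (by positivity) hQN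
            rwa [Real.log_rpow hX0, Real.log_mul hH0.ne' hNpos.ne'] at h
          have hkey : 0 ≤ ((k : ℝ) - 2) * (Real.log H + Real.log N - (1 + ε) * Real.log X) :=
            mul_nonneg (by linarith) (by linarith)
          push_cast
          nlinarith [hkey, hlaX]
        have hstep2 : H ^ ((1 : ℝ) - (k : ℝ)) * (N / (a : ℝ)) ^ (-(k : ℝ)) *
              (X / (a : ℝ)) ^ ((k : ℝ) - 1)
            ≤ X ^ (2 + 2 * ε - ε * k) / N ^ 2 := by
          refine le_trans ((Real.log_le_log_iff hLpos hRpos).mp hlog) ?_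
          have h1 : H⁻¹ * X ^ (2 + 2 * ε - ε * k) ≤ X ^ (2 + 2 * ε - ε * k) := by
            nth_rewrite 2 [← one_mul (X ^ (2 + 2 * ε - ε * k))]
            exact mul_le_mul_of_nonneg_right (inv_le_one_of_one_le₀ hH1) (by positivity)
          exact div_le_div_of_nonneg_right h1 (by positivity)
        calc ‖G a p ((n : ℝ) / (a : ℝ))‖
            ≤ Ck k * H ^ ((1 : ℝ) - (k : ℝ)) * (N / (a : ℝ)) ^ (-(k : ℝ)) *
              (1 + ((p : ℝ) / (a : ℝ)) ^ ((k : ℝ) - 1)) := hGb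
          _ ≤ |Ck k| * H ^ ((1 : ℝ) - (k : ℝ)) * (N / (a : ℝ)) ^ (-(k : ℝ)) *
              (2 * (X / (a : ℝ)) ^ ((k : ℝ) - 1)) := by
              refine mul_le_mul ?_ hstep1 (by positivity) (by positivity)
              exact mul_le_mul_of_nonneg_right
                (mul_le_mul_of_nonneg_right (le_abs_self _) (by positivity)) (by positivity)
          _ = 2 * |Ck k| * (H ^ ((1 : ℝ) - (k : ℝ)) * (N / (a : ℝ)) ^ (-(k : ℝ)) *
              (X / (a : ℝ)) ^ ((k : ℝ) - 1)) := by ring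
          _ ≤ 2 * |Ck k| * (X ^ (2 + 2 * ε - ε * k) / N ^ 2) :=
              mul_le_mul_of_nonneg_left hstep2 (by positivity)
          _ = D * (1 / (n : ℝ) ^ 2) := by rw [hD, hN, sq_abs]; ring
      calc ∑ p ∈ Finset.Icc 1 ⌊X⌋₊, ‖G a p ((n : ℝ) / (a : ℝ))‖
          ≤ ∑ _p ∈ Finset.Icc 1 ⌊X⌋₊, D * (1 / (n : ℝ) ^ 2) := Finset.sum_le_sum hp
        _ = (⌊X⌋₊ : ℝ) * (D * (1 / (n : ℝ) ^ 2)) := by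
            rw [Finset.sum_const, Nat.card_Icc, nsmul_eq_mul]
            norm_num
        _ ≤ X * (D * (1 / (n : ℝ) ^ 2)) := by
            exact mul_le_mul_of_nonneg_right (Nat.floor_le hX0.le) (by positivity)
        _ = (X * D) * (1 / (n : ℝ) ^ 2) := by ring
    · positivity
  -- assemble
  have hgsum : Summable (fun n : ℤ => (X * D) * (1 / (n : ℝ) ^ 2)) := hS0sum.mul_left _
  have hf_nonneg : ∀ a : ℕ, ∀ n : ℤ,
      0 ≤ (if X ^ (1 + ε) / H < (|n| : ℝ) then
          ∑ p ∈ Finset.Icc 1 ⌊X⌋₊, ‖G a p ((n : ℝ) / (a : ℝ))‖ else 0) := by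
    intro a n
    split_ifs
    · exact Finset.sum_nonneg fun p _ => norm_nonneg _
    · exact le_refl 0
  calc ∑ a ∈ Finset.Icc 1 ⌊X⌋₊, (‖α a‖ / (a : ℝ)) *
          ∑' n : ℤ, (if X ^ (1 + ε) / H < (|n| : ℝ) then
            ∑ p ∈ Finset.Icc 1 ⌊X⌋₊, ‖G a p ((n : ℝ) / (a : ℝ))‖ else 0)
      ≤ ∑ _a ∈ Finset.Icc 1 ⌊X⌋₊, X ^ ε * ((X * D) * S0) := by
        refine Finset.sum_le_sum fun a ha => ?_
        obtain ⟨ha1, haX'⟩ := Finset.mem_Icc.mp ha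
        have haR1 : (1 : ℝ) ≤ (a : ℝ) := by exact_mod_cast ha1
        have haX : (a : ℝ) ≤ X := le_trans (by exact_mod_cast haX') (Nat.floor_le hX0.le)
        have hαa : ‖α a‖ / (a : ℝ) ≤ X ^ ε := by
          calc ‖α a‖ / (a : ℝ) ≤ ‖α a‖ := div_le_self (norm_nonneg _) haR1
            _ ≤ (a : ℝ) ^ ε := hα a ha1
            _ ≤ X ^ ε := Real.rpow_le_rpow (by positivity) haX hε.le
        have hfs : Summable (fun n : ℤ => (if X ^ (1 + ε) / H < (|n| : ℝ) then
            ∑ p ∈ Finset.Icc 1 ⌊X⌋₊, ‖G a p ((n : ℝ) / (a : ℝ))‖ else 0)) :=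
          Summable.of_nonneg_of_le (hf_nonneg a) (key a ha) hgsum
        have htle : ∑' n : ℤ, (if X ^ (1 + ε) / H < (|n| : ℝ) then
            ∑ p ∈ Finset.Icc 1 ⌊X⌋₊, ‖G a p ((n : ℝ) / (a : ℝ))‖ else 0) ≤ (X * D) * S0 := by
          calc ∑' n : ℤ, (if X ^ (1 + ε) / H < (|n| : ℝ) then
              ∑ p ∈ Finset.Icc 1 ⌊X⌋₊, ‖G a p ((n : ℝ) / (a : ℝ))‖ else 0)
              ≤ ∑' n : ℤ, (X * D) * (1 / (n : ℝ) ^ 2) := Summable.tsum_le_tsum (key a ha) hfs hgsum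
            _ = (X * D) * S0 := tsum_mul_left
        exact mul_le_mul hαa htle (tsum_nonneg (hf_nonneg a)) (by positivity)
    _ = (⌊X⌋₊ : ℝ) * (X ^ ε * ((X * D) * S0)) := by
        rw [Finset.sum_const, Nat.card_Icc, nsmul_eq_mul]
        norm_num
    _ ≤ X * (X ^ ε * ((X * D) * S0)) :=
        mul_le_mul_of_nonneg_right (Nat.floor_le hX0.le) (by positivity)
    _ = (2 * |Ck k| * S0) * (X * X ^ ε * X * X ^ (2 + 2 * ε - ε * k)) := by rw [hD]; ring
    _ ≤ (2 * |Ck k| * S0) * X ^ (-100 : ℝ) := by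
        refine mul_le_mul_of_nonneg_left ?_ (by positivity)
        have hcomb : X * X ^ ε * X * X ^ (2 + 2 * ε - ε * k)
            = X ^ (1 + ε + (1 + (2 + 2 * ε - ε * k))) := by
          rw [Real.rpow_add hX0, Real.rpow_add hX0, Real.rpow_add hX0, Real.rpow_one]
          ring
        rw [hcomb]
        exact Real.rpow_le_rpow_of_exponent_le hX1 (by linarith)
    _ ≤ (2 * (1 + |Ck k|) * (1 + S0)) * X ^ (-100 : ℝ) := by
        refine mul_le_mul_of_nonneg_right ?_ (by positivity)
        nlinarith [abs_nonneg (Ck k), hS0nn]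
end
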